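/- Let X be a completely regular Hausdorff (Tychonoff) space containing a compact subspace K such that C_p(K) has property (B). Then C_p(X) also has property (B). -/

import Mathlib

/-!
The restriction map `C_p(X) → C_p(K)` is continuous and open. It is open because a function on
`K` extends to `X` (through the Stone–Čech compactification, where `K` sits as a closed subset,
and Tietze), and the extension can then be corrected at finitely many points outside `K` by
bump functions vanishing on `K`. Property (B) pulls back along continuous open maps, since the
preimage of a closed nowhere-dense set under such a map is again closed and nowhere dense.
-/

/-- A topological space `X` has property (B) if it can be covered by countably many closed
nowhere-dense sets `A n` such that every compact subset of `X` is contained in some `A n`. -/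
def PropertyB (X : Type*) [TopologicalSpace X] : Prop :=
  ∃ A : ℕ → Set X,
    (∀ n, IsClosed (A n)) ∧ (∀ n, interior (A n) = ∅) ∧
    (⋃ n, A n) = Set.univ ∧
    ∀ C : Set X, IsCompact C → ∃ n, C ⊆ A n

/-- The topology of pointwise convergence on `C(X, ℝ)`. -/
noncomputable def pointwiseTopology (X : Type*) [TopologicalSpace X] :
    TopologicalSpace C(X, ℝ) :=
  TopologicalSpace.induced (fun f : C(X, ℝ) => (f : X → ℝ)) Pi.topologicalSpace

open Set Filter Topology

universe u v

theorem PropertyB.of_isOpenMap {Y Z : Type*} [TopologicalSpace Y] [TopologicalSpace Z]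
    {f : Y → Z} (hf : Continuous f) (hfo : IsOpenMap f) (hB : PropertyB Z) : PropertyB Y := by
  obtain ⟨A, hA_closed, hA_int, hA_union, hA_compact⟩ := hB
  refine ⟨fun n => f ⁻¹' A n, fun n => (hA_closed n).preimage hf, fun n => ?_, ?_, fun C hC => ?_⟩
  · rw [← hfo.preimage_interior_eq_interior_preimage hf, hA_int n, preimage_empty]
  · rw [← preimage_iUnion, hA_union, preimage_univ]
  · obtain ⟨n, hn⟩ := hA_compact (f '' C) (hC.image hf)
    exact ⟨n, image_subset_iff.mp hn⟩

theorem IsCompact.exists_restrict_eq {X : Type u} {Y : Type v} [TopologicalSpace X] [T35Space X]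
    [TopologicalSpace Y] [TietzeExtension.{u, v} Y] {K : Set X} (hK : IsCompact K) (f : C(K, Y)) :
    ∃ g : C(X, Y), g.restrict K = f := by
  have : CompactSpace K := isCompact_iff_compactSpace.mp hK
  let e : C(K, StoneCech X) :=
    ⟨stoneCechUnit ∘ (↑), continuous_stoneCechUnit.comp continuous_subtype_val⟩
  have he : IsClosedEmbedding e :=
    e.continuous.isClosedEmbedding (isEmbedding_stoneCechUnit.injective.comp Subtype.val_injective)
  obtain ⟨G, hG⟩ := f.exists_extension he
  exact ⟨G.comp ⟨stoneCechUnit, continuous_stoneCechUnit⟩, hG⟩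

theorem exists_continuousMap_eqOn_eqOn_of_finite {X : Type*} [TopologicalSpace X]
    [CompletelyRegularSpace X] [T1Space X] {K D : Set X} (hK : IsClosed K) (hD : D.Finite)
    (hDK : Disjoint D K) (g : C(X, ℝ)) (v : X → ℝ) :
    ∃ G : C(X, ℝ), EqOn G g K ∧ EqOn G v D := by
  induction D, hD using Set.Finite.induction_on with
  | empty => exact ⟨g, eqOn_refl _ _, eqOn_empty _ _⟩
  | @insert a D haD hD ih =>
    rw [disjoint_insert_left] at hDK
    obtain ⟨G, hGK, hGD⟩ := ih hDK.2
    obtain ⟨φ, hφ, hφa, hφ1⟩ := CompletelyRegularSpace.completely_regular a (K ∪ D)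
      (hK.union hD.isClosed) (by simp [hDK.1, haD])
    refine ⟨G + (v a - G a) • (1 - ⟨fun x => (φ x : ℝ), by fun_prop⟩), fun x hx => ?_, ?_⟩
    · simp [hφ1 (mem_union_left D hx), hGK hx]
    · rintro x (rfl | hx)
      · simp [hφa]
      · simp [hφ1 (mem_union_right K hx), hGD hx]

theorem mem_nhds_pointwiseTopology_iff {X : Type*} [TopologicalSpace X] {g : C(X, ℝ)}
    {U : Set C(X, ℝ)} :
    U ∈ @nhds _ (pointwiseTopology X) g ↔ ∃ S : Set X, S.Finite ∧ ∃ t : X → Set ℝ,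
      (∀ x, t x ∈ 𝓝 (g x)) ∧ ∀ f : C(X, ℝ), (∀ x ∈ S, f x ∈ t x) → f ∈ U := by
  rw [pointwiseTopology, nhds_induced, nhds_pi, mem_comap]
  constructor
  · rintro ⟨V, hV, hVU⟩
    obtain ⟨S, hS, t, ht, hSt⟩ := mem_pi.mp hV
    exact ⟨S, hS, t, ht, fun f hf => hVU (hSt hf)⟩
  · rintro ⟨S, hS, t, ht, hSt⟩
    exact ⟨S.pi t, pi_mem_pi hS fun x _ => ht x, fun f hf => hSt f hf⟩

theorem continuous_restrict_pointwiseTopology {X : Type*} [TopologicalSpace X] (K : Set X) :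
    Continuous[pointwiseTopology X, pointwiseTopology K] (ContinuousMap.restrict K) := by
  let _ := pointwiseTopology X
  exact continuous_induced_rng.mpr <|
    continuous_pi fun k => (continuous_apply k.1).comp continuous_induced_dom

theorem isOpenMap_restrict_pointwiseTopology {X : Type*} [TopologicalSpace X] [T35Space X]
    {K : Set X} (hK : IsCompact K) :
    @IsOpenMap _ _ (pointwiseTopology X) (pointwiseTopology K) (ContinuousMap.restrict K) := by
  refine @IsOpenMap.of_nhds_le _ _ _ (pointwiseTopology X) (pointwiseTopology K) fun g U hU => ?_
  obtain ⟨S, hS, t, ht, hSt⟩ := mem_nhds_pointwiseTopology_iff.mp hU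
  refine mem_nhds_pointwiseTopology_iff.mpr ⟨Subtype.val ⁻¹' S,
    hS.preimage Subtype.val_injective.injOn, fun k => t k, fun k => ht k, fun h hh => ?_⟩
  obtain ⟨g₀, rfl⟩ := hK.exists_restrict_eq h
  obtain ⟨G, hGK, hGS⟩ := exists_continuousMap_eqOn_eqOn_of_finite hK.isClosed hS.sdiff
    disjoint_sdiff_left g₀ g
  have hG : G.restrict K = g₀.restrict K := ContinuousMap.ext fun k => hGK k.2
  refine hG ▸ hSt G fun x hx => ?_
  by_cases hxK : x ∈ K
  · simpa [hGK hxK] using hh ⟨x, hxK⟩ hx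
  · simpa [hGS ⟨hx, hxK⟩] using mem_of_mem_nhds (ht x)

/-- Let `X` be a Tychonoff (completely regular Hausdorff) space containing a compact
subspace `K` such that `C_p(K)` has property (B). Then `C_p(X)` also has property (B). -/
theorem statement12 (X : Type*) [TopologicalSpace X] [CompletelyRegularSpace X] [T2Space X]
    (K : Set X) (hK : IsCompact K)
    (hB : @PropertyB C(K, ℝ) (pointwiseTopology K)) :
    @PropertyB C(X, ℝ) (pointwiseTopology X) := by
  have : T35Space X := {}
  exact @PropertyB.of_isOpenMap _ _ (pointwiseTopology X) (pointwiseTopology K) _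
    (continuous_restrict_pointwiseTopology K) (isOpenMap_restrict_pointwiseTopology hK) hB
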